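/- (Lemma on avoiding small indices) Let C be a countable atomless Boolean subalgebra of the interval algebra B. Then for every nonempty a ∈ C and every n ∈ ω there exists b ∈ C with b ⊆ a and min(int(b)) > n. -/

import Mathlib

open Set

/-- `X = [0,1) ∩ ℚ`, represented as a set of rationals. -/
def Xset : Set ℚ := {x | 0 ≤ x ∧ x < 1}

/-- `X ∪ {1}`, the possible endpoints. -/
def Eset : Set ℚ := Xset ∪ {1}

/-- `f` (restricted to `{0,…,2n-1}`) is an increasing sequence of endpoints
representing `a` as a union of half-open intervals `[f(2i), f(2i+1))`. -/
def IsGoodSeq (n : ℕ) (f : ℕ → ℚ) (a : Set ℚ) : Prop :=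
  (∀ i < 2 * n, f i ∈ Eset) ∧
  (∀ i j : ℕ, i < j → j < 2 * n → f i < f j) ∧
  (∀ x ∈ Xset, (x ∈ a ↔ ∃ i < n, f (2 * i) ≤ x ∧ x < f (2 * i + 1)))

/-- A subset of `X` is good if it is a finite union of half-open intervals. -/
def IsGood (a : Set ℚ) : Prop := a ⊆ Xset ∧ ∃ n f, IsGoodSeq n f a

/-- The set of endpoints of a good set (the image of its endpoint sequence). -/
def endpoints (a : Set ℚ) : Set ℚ :=
  {u | ∃ n f, IsGoodSeq n f a ∧ ∃ i < 2 * n, f i = u}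

/-- A function `e` is finite-to-one on `X ∪ {1}`. -/
def FinToOne (e : ℚ → ℕ) : Prop := ∀ m : ℕ, {x ∈ Eset | e x = m}.Finite

/-- `int(a) = {e(u) : u ∈ Im(seq_a)}`, the interesting numbers of `a`. -/
def intS (e : ℚ → ℕ) (a : Set ℚ) : Set ℕ := e '' endpoints a

/-- `a` and `b` oscillate at `i`: for some side `k`, `i` belongs to `int` of that
side only, and the largest `j < i` lying in the symmetric difference
`int(a) ∆ int(b)` (if any) belongs to the other side only. -/
def OscAt (e : ℚ → ℕ) (a b : Set ℚ) (i : ℕ) : Prop :=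
  ∃ k : Bool,
    (i ∈ intS e (bif k then b else a) ∧ i ∉ intS e (bif k then a else b)) ∧
    ∀ j, j < i → j ∈ symmDiff (intS e a) (intS e b) →
      (∀ j', j < j' → j' < i → j' ∉ symmDiff (intS e a) (intS e b)) →
      (j ∈ intS e (bif k then a else b) ∧ j ∉ intS e (bif k then b else a))

/-- The oscillation of `a` and `b`: the number of `i` at which they oscillate. -/
noncomputable def osc (e : ℚ → ℕ) (a b : Set ℚ) : ℕ := {i | OscAt e a b i}.ncard

/-- `C` is a Boolean subalgebra of the interval algebra of good subsets of `X`. -/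
def IsSubalg (C : Set (Set ℚ)) : Prop :=
  (∀ a ∈ C, IsGood a) ∧ ∅ ∈ C ∧ Xset ∈ C ∧
  (∀ a ∈ C, ∀ b ∈ C, a ∪ b ∈ C) ∧
  (∀ a ∈ C, ∀ b ∈ C, a ∩ b ∈ C) ∧
  (∀ a ∈ C, Xset \ a ∈ C)

/-- `C` is atomless: every nonempty member properly contains a nonempty member. -/
def IsAtomlessAlg (C : Set (Set ℚ)) : Prop :=
  ∀ a ∈ C, a ≠ ∅ → ∃ b ∈ C, b ≠ ∅ ∧ b ⊂ a

/-!
An endpoint `u` of a good set `b` is either a left endpoint, so `u ∈ b`, or a right endpoint, so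
`b` contains an interval `(α, u)`. Two disjoint sets cannot share a right endpoint, nor both
contain `u`; hence `u` is an endpoint of at most two members of a disjoint family: at most one
containing `u` and at most one not. Since `e` is finite-to-one, only a finite set `F` of endpoints
has `e`-value `≤ n`. Atomlessness splits `a` into `2|F| + 1` disjoint nonempty members of `C`,
and by pigeonhole one of them has no endpoint in `F`.
-/

lemma endpoints_subset_Eset (b : Set ℚ) : endpoints b ⊆ Eset := by
  rintro _ ⟨m, f, hf, i, hi, rfl⟩
  exact hf.1 i hi

lemma Eset_subset_Icc : Eset ⊆ Icc 0 1 := by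
  rintro u (hu | rfl)
  · exact ⟨hu.1, hu.2.le⟩
  · exact ⟨zero_le_one, le_rfl⟩

lemma mem_or_Ioo_subset_of_mem_endpoints {b : Set ℚ} {u : ℚ} (hu : u ∈ endpoints b) :
    u ∈ b ∨ ∃ α < u, Ioo α u ⊆ b := by
  obtain ⟨m, f, ⟨hE, hmono, hmem⟩, i, hi, rfl⟩ := hu
  have hIcc : ∀ j < 2 * m, f j ∈ Icc (0 : ℚ) 1 := fun j hj => Eset_subset_Icc (hE j hj)
  obtain ⟨k, rfl | rfl⟩ := Nat.even_or_odd' i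
  · left
    have hlt : f (2 * k) < f (2 * k + 1) := hmono _ _ (by omega) (by omega)
    have hX : f (2 * k) ∈ Xset := ⟨(hIcc _ hi).1, hlt.trans_le (hIcc _ (by omega)).2⟩
    exact (hmem _ hX).2 ⟨k, by omega, le_rfl, hlt⟩
  · right
    refine ⟨f (2 * k), hmono _ _ (by omega) hi, fun x ⟨hx₁, hx₂⟩ => ?_⟩
    have hX : x ∈ Xset := ⟨(hIcc _ (by omega)).1.trans hx₁.le, hx₂.trans_le (hIcc _ hi).2⟩
    exact (hmem _ hX).2 ⟨k, by omega, hx₁.le, hx₂⟩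

lemma mem_or_mem_of_mem_endpoints_of_disjoint {b c : Set ℚ} {u : ℚ} (hbc : Disjoint b c)
    (hb : u ∈ endpoints b) (hc : u ∈ endpoints c) : u ∈ b ∨ u ∈ c := by
  rcases mem_or_Ioo_subset_of_mem_endpoints hb with hub | ⟨α, hαu, hαb⟩
  · exact Or.inl hub
  rcases mem_or_Ioo_subset_of_mem_endpoints hc with huc | ⟨β, hβu, hβc⟩
  · exact Or.inr huc
  obtain ⟨x, hx₁, hx₂⟩ := exists_between (max_lt hαu hβu)
  exact (hbc.ne_of_mem (hαb ⟨(le_max_left _ _).trans_lt hx₁, hx₂⟩)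
    (hβc ⟨(le_max_right _ _).trans_lt hx₁, hx₂⟩) rfl).elim

lemma exists_disjoint_endpoints_of_card_lt (F : Finset ℚ) (S : Finset (Set ℚ))
    (hS : (S : Set (Set ℚ)).PairwiseDisjoint id) (hcard : 2 * F.card < S.card) :
    ∃ b ∈ S, Disjoint (endpoints b) F := by
  classical
  by_contra! h
  have hmeet : ∀ b ∈ S, ∃ u ∈ endpoints b, u ∈ F := fun b hb => by
    simpa [Set.not_disjoint_iff] using h b hb
  choose! u hu hF using hmeet
  obtain ⟨b, hb, c, hc, hne, hbc⟩ := Finset.exists_ne_map_eq_of_card_lt_of_maps_to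
    (t := F ×ˢ Finset.univ) (f := fun b => (u b, decide (u b ∈ b)))
    (by simpa [mul_comm] using hcard)
    fun b hb => Finset.mem_product.2 ⟨hF b hb, Finset.mem_univ _⟩
  simp only [Prod.mk.injEq, decide_eq_decide] at hbc
  obtain ⟨hu_eq, hmem⟩ := hbc
  have hdisj : Disjoint b c := hS hb hc hne
  rcases mem_or_mem_of_mem_endpoints_of_disjoint hdisj (hu b hb) (hu_eq ▸ hu c hc) with h | h
  · exact hdisj.ne_of_mem h (hu_eq ▸ hmem.1 h) rfl
  · exact hdisj.ne_of_mem (hmem.2 (hu_eq ▸ h)) h rfl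

lemma IsGood.endpoints_nonempty {b : Set ℚ} (hb : IsGood b) (hne : b.Nonempty) :
    (endpoints b).Nonempty := by
  obtain ⟨hsub, m, f, hf⟩ := hb
  obtain ⟨x, hx⟩ := hne
  obtain ⟨i, hi, -⟩ := (hf.2.2 x (hsub hx)).1 hx
  exact ⟨f 0, m, f, hf, 0, by omega, rfl⟩

lemma FinToOne.finite_setOf_le {e : ℚ → ℕ} (he : FinToOne e) (n : ℕ) :
    {x ∈ Eset | e x ≤ n}.Finite :=
  ((finite_Iic n).biUnion fun m _ => he m).subset fun _ hx => mem_biUnion hx.2 ⟨hx.1, rfl⟩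

lemma IsSubalg.diff_mem {C : Set (Set ℚ)} (hC : IsSubalg C) {a b : Set ℚ} (ha : a ∈ C)
    (hb : b ∈ C) : a \ b ∈ C := by
  have h : a ∩ (Xset \ b) = a \ b := by
    rw [← inter_sdiff_assoc, inter_eq_left.2 (hC.1 a ha).1]
  exact h ▸ hC.2.2.2.2.1 a ha _ (hC.2.2.2.2.2 b hb)

lemma IsAtomlessAlg.exists_pairwiseDisjoint {C : Set (Set ℚ)} (hC : IsSubalg C)
    (hCat : IsAtomlessAlg C) (k : ℕ) {a : Set ℚ} (ha : a ∈ C) (hne : a ≠ ∅) :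
    ∃ S : Finset (Set ℚ), S.card = k ∧ (∀ b ∈ S, b ∈ C ∧ b ≠ ∅ ∧ b ⊆ a) ∧
      (S : Set (Set ℚ)).PairwiseDisjoint id := by
  induction k generalizing a with
  | zero => exact ⟨∅, rfl, by simp, by simp⟩
  | succ k ih =>
    obtain ⟨c, hcC, hcne, hca⟩ := hCat a ha hne
    have hrest : a \ c ≠ ∅ := by
      obtain ⟨x, hxa, hxc⟩ := exists_of_ssubset hca
      exact nonempty_iff_ne_empty.1 ⟨x, hxa, hxc⟩
    obtain ⟨S, hcard, hS, hdisj⟩ := ih (hC.diff_mem ha hcC) hrest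
    have hdisj_c : ∀ b ∈ S, Disjoint c b := fun b hb =>
      disjoint_sdiff_right.mono_right (hS b hb).2.2
    have hcS : c ∉ S := fun hc => hcne (disjoint_self.1 (hdisj_c c hc))
    refine ⟨insert c S, by rw [Finset.card_insert_of_notMem hcS, hcard], ?_, ?_⟩
    · simp only [Finset.mem_insert, forall_eq_or_imp]
      exact ⟨⟨hcC, hcne, hca.subset⟩, fun b hb =>
        ⟨(hS b hb).1, (hS b hb).2.1, (hS b hb).2.2.trans sdiff_subset⟩⟩
    · rw [Finset.coe_insert]
      exact hdisj.insert fun b hb _ => hdisj_c b hb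

theorem avoid_small_indices_general (e : ℚ → ℕ) (he : FinToOne e)
    (C : Set (Set ℚ)) (hC : IsSubalg C) (hCat : IsAtomlessAlg C)
    (a : Set ℚ) (ha : a ∈ C) (hne : a ≠ ∅) (n : ℕ) :
    ∃ b ∈ C, b ⊆ a ∧ (intS e b).Nonempty ∧ ∀ m ∈ intS e b, n < m := by
  set F := (he.finite_setOf_le n).toFinset
  obtain ⟨S, hcard, hS, hdisj⟩ := hCat.exists_pairwiseDisjoint hC (2 * F.card + 1) ha hne
  obtain ⟨b, hbS, hbF⟩ := exists_disjoint_endpoints_of_card_lt F S hdisj (by omega)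
  obtain ⟨hbC, hbne, hba⟩ := hS b hbS
  refine ⟨b, hbC, hba, ((hC.1 b hbC).endpoints_nonempty (nonempty_iff_ne_empty.2 hbne)).image e,
    ?_⟩
  rintro m ⟨v, hv, rfl⟩
  by_contra! hle
  exact hbF.ne_of_mem hv (by simpa [F] using ⟨endpoints_subset_Eset b hv, hle⟩) rfl

/-- inside a countable atomless subalgebra, every nonempty
element contains an element all of whose interesting numbers exceed `n`. -/
theorem avoid_small_indices (e : ℚ → ℕ) (he : FinToOne e)
    (C : Set (Set ℚ)) (hC : IsSubalg C) (hCat : IsAtomlessAlg C)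
    (hCc : C.Countable) (a : Set ℚ) (ha : a ∈ C) (hne : a ≠ ∅) (n : ℕ) :
    ∃ b ∈ C, b ⊆ a ∧ (intS e b).Nonempty ∧ ∀ m ∈ intS e b, n < m :=
  avoid_small_indices_general e he C hC hCat a ha hne n
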